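/- arXiv:nlin/0004017 — 2 statements merged into one kernel-verified Lean document; each statement's English description precedes it below -/
import Mathlib

section
/- Let u : ℝ² → ℝ, let φ, ψ, Δ be as in the binary Bäcklund transformation (φ a smooth solution of the heat equation with potential u, ψ a smooth solution of the dual heat equation with potential u, Δ smooth and nowhere vanishing with ∂_{x₁}Δ = φψ and ∂_{x₂}Δ = −(φ∂_{x₁}ψ − ψ∂_{x₁}φ)). Let f : ℝ² → ℂ be a smooth solution of the heat conduction equation with potential u, let C ∈ ℂ, and let β : ℝ² → ℂ be smooth with ∂_{x₁}β = f·ψ and ∂_{x₂}β = −(f·∂_{x₁}ψ − ψ·∂_{x₁}f). Then the Darboux transform φ₁ := f − (φ/Δ)·(C + β) solves the heat conduction equation with potential u₁ = u − 2∂_{x₁}²(log |Δ|). -/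
open MeasureTheory Filter Set

/-- Partial derivative with respect to the first coordinate on `ℝ²`. -/
noncomputable def D1 {E : Type*} [NormedAddCommGroup E] [NormedSpace ℝ E]
    (f : ℝ × ℝ → E) (x : ℝ × ℝ) : E :=
  deriv (fun t => f (t, x.2)) x.1

/-- Partial derivative with respect to the second coordinate on `ℝ²`. -/
noncomputable def D2 {E : Type*} [NormedAddCommGroup E] [NormedSpace ℝ E]
    (f : ℝ × ℝ → E) (x : ℝ × ℝ) : E :=
  deriv (fun t => f (x.1, t)) x.2

section Helpers

variable {E : Type*} [NormedAddCommGroup E] [NormedSpace ℝ E]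

lemma sliceD1 {f : ℝ × ℝ → E} (hf : ContDiff ℝ (⊤ : ℕ∞) f) (x : ℝ × ℝ) :
    HasDerivAt (fun t => f (t, x.2)) (D1 f x) x.1 := by
  have h : DifferentiableAt ℝ (fun t : ℝ => f (t, x.2)) x.1 :=
    ((hf.differentiable (by simp)) (x.1, x.2)).comp x.1
      (differentiableAt_id.prodMk (differentiableAt_const _))
  exact h.hasDerivAt

lemma sliceD2 {f : ℝ × ℝ → E} (hf : ContDiff ℝ (⊤ : ℕ∞) f) (x : ℝ × ℝ) :
    HasDerivAt (fun t => f (x.1, t)) (D2 f x) x.2 := by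
  have h : DifferentiableAt ℝ (fun t : ℝ => f (x.1, t)) x.2 :=
    ((hf.differentiable (by simp)) (x.1, x.2)).comp x.2
      ((differentiableAt_const _).prodMk differentiableAt_id)
  exact h.hasDerivAt

lemma contDiff_D1 {f : ℝ × ℝ → E} (hf : ContDiff ℝ (⊤ : ℕ∞) f) : ContDiff ℝ (⊤ : ℕ∞) (D1 f) := by
  have h1 : D1 f = fun x : ℝ × ℝ => fderiv ℝ f x (1, 0) := by
    funext x
    have hline : HasDerivAt (fun t : ℝ => ((t, x.2) : ℝ × ℝ)) (1, 0) x.1 :=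
      (hasDerivAt_id x.1).prodMk (hasDerivAt_const x.1 x.2)
    have hc : HasDerivAt (fun t : ℝ => f (t, x.2)) (fderiv ℝ f x (1, 0)) x.1 :=
      ((hf.differentiable (by simp)) x).hasFDerivAt.comp_hasDerivAt x.1 hline
    exact hc.deriv
  rw [h1]
  exact (hf.fderiv_right (by simp)).clm_apply contDiff_const

end Helpers

/-- With `φ, ψ, Δ` as in the binary Bäcklund transformation, if `f` is a
smooth solution of the heat equation with potential `u`, `C ∈ ℂ`, and `β` satisfies
`∂₁β = f·ψ`, `∂₂β = -(f·∂₁ψ - ψ·∂₁f)`, then the Darboux transform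
`φ₁ = f - (φ/Δ)(C + β)` solves the heat equation with potential `u₁ = u - 2∂₁² log |Δ|`. -/
theorem binary_darboux_transform (u : ℝ × ℝ → ℝ) (φ ψ Δ : ℝ × ℝ → ℝ)
    (f β : ℝ × ℝ → ℂ) (C : ℂ)
    (hφ : ContDiff ℝ (⊤ : ℕ∞) φ)
    (hφeq : ∀ x : ℝ × ℝ, -D2 φ x + D1 (D1 φ) x - u x * φ x = 0)
    (hψ : ContDiff ℝ (⊤ : ℕ∞) ψ)
    (hψeq : ∀ x : ℝ × ℝ, D2 ψ x + D1 (D1 ψ) x - u x * ψ x = 0)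
    (hΔ : ContDiff ℝ (⊤ : ℕ∞) Δ) (hΔ0 : ∀ x, Δ x ≠ 0)
    (hΔ1 : ∀ x : ℝ × ℝ, D1 Δ x = φ x * ψ x)
    (hΔ2 : ∀ x : ℝ × ℝ, D2 Δ x = -(φ x * D1 ψ x - ψ x * D1 φ x))
    (hf : ContDiff ℝ (⊤ : ℕ∞) f)
    (hfeq : ∀ x : ℝ × ℝ, -D2 f x + D1 (D1 f) x - (u x : ℂ) * f x = 0)
    (hβ : ContDiff ℝ (⊤ : ℕ∞) β)
    (hβ1 : ∀ x : ℝ × ℝ, D1 β x = f x * (ψ x : ℂ))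
    (hβ2 : ∀ x : ℝ × ℝ, D2 β x = -(f x * ((D1 ψ x : ℝ) : ℂ) - (ψ x : ℂ) * D1 f x))
    (u₁ : ℝ × ℝ → ℝ)
    (hu₁ : ∀ x : ℝ × ℝ, u₁ x = u x - 2 * D1 (D1 (fun y => Real.log |Δ y|)) x)
    (φ₁ : ℝ × ℝ → ℂ)
    (hφ₁ : ∀ x : ℝ × ℝ, φ₁ x = f x - ((φ x / Δ x : ℝ) : ℂ) * (C + β x)) :
    ∀ x : ℝ × ℝ, -D2 φ₁ x + D1 (D1 φ₁) x - (u₁ x : ℂ) * φ₁ x = 0 := by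
  -- complex nonvanishing of Δ
  have hDC : ∀ y : ℝ × ℝ, ((Δ y : ℝ) : ℂ) ≠ 0 := fun y => Complex.ofReal_ne_zero.mpr (hΔ0 y)
  -- heat equation consequences for second-variable derivatives
  have e2f : ∀ y : ℝ × ℝ, D2 f y = D1 (D1 f) y - (u y : ℂ) * f y := fun y => by
    have h := hfeq y; linear_combination -h
  have e2φ : ∀ y : ℝ × ℝ, D2 φ y = D1 (D1 φ) y - u y * φ y := fun y => by
    have h := hφeq y; linarith
  have e2ψ : ∀ y : ℝ × ℝ, D2 ψ y = u y * ψ y - D1 (D1 ψ) y := fun y => by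
    have h := hψeq y; linarith
  -- slice derivative facts
  have Hf1 : ∀ y : ℝ × ℝ, HasDerivAt (fun t => f (t, y.2)) (D1 f y) y.1 :=
    fun y => sliceD1 hf y
  have Hφ1 : ∀ y : ℝ × ℝ, HasDerivAt (fun t => φ (t, y.2)) (D1 φ y) y.1 :=
    fun y => sliceD1 hφ y
  have Hψ1 : ∀ y : ℝ × ℝ, HasDerivAt (fun t => ψ (t, y.2)) (D1 ψ y) y.1 :=
    fun y => sliceD1 hψ y
  have HΔ1 : ∀ y : ℝ × ℝ, HasDerivAt (fun t => Δ (t, y.2)) (φ y * ψ y) y.1 := by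
    intro y; have h := sliceD1 hΔ y; rwa [hΔ1 y] at h
  have Hβ1 : ∀ y : ℝ × ℝ, HasDerivAt (fun t => β (t, y.2)) (f y * (ψ y : ℂ)) y.1 := by
    intro y; have h := sliceD1 hβ y; rwa [hβ1 y] at h
  have HDf1 : ∀ y : ℝ × ℝ, HasDerivAt (fun t => D1 f (t, y.2)) (D1 (D1 f) y) y.1 :=
    fun y => sliceD1 (contDiff_D1 hf) y
  have HDφ1 : ∀ y : ℝ × ℝ, HasDerivAt (fun t => D1 φ (t, y.2)) (D1 (D1 φ) y) y.1 :=
    fun y => sliceD1 (contDiff_D1 hφ) y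
  have Hf2 : ∀ y : ℝ × ℝ, HasDerivAt (fun t => f (y.1, t))
      (D1 (D1 f) y - (u y : ℂ) * f y) y.2 := by
    intro y; have h := sliceD2 hf y; rwa [e2f y] at h
  have Hφ2 : ∀ y : ℝ × ℝ, HasDerivAt (fun t => φ (y.1, t))
      (D1 (D1 φ) y - u y * φ y) y.2 := by
    intro y; have h := sliceD2 hφ y; rwa [e2φ y] at h
  have HΔ2 : ∀ y : ℝ × ℝ, HasDerivAt (fun t => Δ (y.1, t))
      (-(φ y * D1 ψ y - ψ y * D1 φ y)) y.2 := by
    intro y; have h := sliceD2 hΔ y; rwa [hΔ2 y] at h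
  have Hβ2 : ∀ y : ℝ × ℝ, HasDerivAt (fun t => β (y.1, t))
      (-(f y * ((D1 ψ y : ℝ) : ℂ) - (ψ y : ℂ) * D1 f y)) y.2 := by
    intro y; have h := sliceD2 hβ y; rwa [hβ2 y] at h
  -- φ₁ as an explicit function
  have hP : φ₁ = fun y => f y - (φ y : ℂ) / (Δ y : ℂ) * (C + β y) := by
    funext y; rw [hφ₁ y]; push_cast; ring
  -- first x₁-derivative of φ₁
  have hd1 : D1 (fun y => f y - (φ y : ℂ) / (Δ y : ℂ) * (C + β y)) =
      fun y => D1 f y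
        - (((D1 φ y : ℝ) : ℂ) * (Δ y : ℂ) - (φ y : ℂ) * ((φ y : ℂ) * (ψ y : ℂ)))
            / ((Δ y : ℂ)) ^ 2 * (C + β y)
        - (φ y : ℂ) / (Δ y : ℂ) * (f y * (ψ y : ℂ)) := by
    funext y
    have h := (Hf1 y).sub
      ((((Hφ1 y).ofReal_comp.div ((HΔ1 y).ofReal_comp) (hDC y)).mul
        ((hasDerivAt_const y.1 C).add (Hβ1 y))))
    refine h.deriv.trans ?_
    simp only [Pi.div_apply, Pi.add_apply, Prod.mk.eta]
    push_cast
    ring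
  -- the big derivative of log |Δ|
  have hu2 : D1 (D1 (fun y => Real.log |Δ y|)) =
      fun y => ((D1 φ y * ψ y + φ y * D1 ψ y) * Δ y - φ y * ψ y * (φ y * ψ y)) / Δ y ^ 2 := by
    have hl : (fun y : ℝ × ℝ => Real.log |Δ y|) = fun y => Real.log (Δ y) :=
      funext fun y => Real.log_abs (Δ y)
    rw [hl]
    have hDL : D1 (fun y => Real.log (Δ y)) = fun y => φ y * ψ y / Δ y := by
      funext y
      exact ((HΔ1 y).log (hΔ0 y)).deriv
    rw [hDL]
    funext y
    exact (((Hφ1 y).mul (Hψ1 y)).div (HΔ1 y) (hΔ0 y)).deriv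
  intro x
  rw [hP, hd1]
  -- second x₁-derivative
  have h11 : D1 (fun y => D1 f y
        - (((D1 φ y : ℝ) : ℂ) * (Δ y : ℂ) - (φ y : ℂ) * ((φ y : ℂ) * (ψ y : ℂ)))
            / ((Δ y : ℂ)) ^ 2 * (C + β y)
        - (φ y : ℂ) / (Δ y : ℂ) * (f y * (ψ y : ℂ))) x =
      D1 (D1 f) x
        - (((((D1 (D1 φ) x : ℝ) : ℂ) * (Δ x : ℂ)
              + ((D1 φ x : ℝ) : ℂ) * ((φ x : ℂ) * (ψ x : ℂ))
              - (((D1 φ x : ℝ) : ℂ) * ((φ x : ℂ) * (ψ x : ℂ))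
                + (φ x : ℂ) * (((D1 φ x : ℝ) : ℂ) * (ψ x : ℂ)
                  + (φ x : ℂ) * ((D1 ψ x : ℝ) : ℂ)))) * ((Δ x : ℂ)) ^ 2
            - (((D1 φ x : ℝ) : ℂ) * (Δ x : ℂ) - (φ x : ℂ) * ((φ x : ℂ) * (ψ x : ℂ)))
                * (2 * (Δ x : ℂ) * ((φ x : ℂ) * (ψ x : ℂ)))) / (((Δ x : ℂ)) ^ 2) ^ 2
              * (C + β x)
          + (((D1 φ x : ℝ) : ℂ) * (Δ x : ℂ) - (φ x : ℂ) * ((φ x : ℂ) * (ψ x : ℂ)))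
              / ((Δ x : ℂ)) ^ 2 * (f x * (ψ x : ℂ)))
        - ((((D1 φ x : ℝ) : ℂ) * (Δ x : ℂ) - (φ x : ℂ) * ((φ x : ℂ) * (ψ x : ℂ)))
              / ((Δ x : ℂ)) ^ 2 * (f x * (ψ x : ℂ))
          + (φ x : ℂ) / (Δ x : ℂ) * (D1 f x * (ψ x : ℂ) + f x * ((D1 ψ x : ℝ) : ℂ))) := by
    have hN : HasDerivAt (fun t => ((D1 φ (t, x.2) : ℝ) : ℂ) * (Δ (t, x.2) : ℂ)
          - (φ (t, x.2) : ℂ) * ((φ (t, x.2) : ℂ) * (ψ (t, x.2) : ℂ)))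
        (((D1 (D1 φ) x : ℝ) : ℂ) * (Δ x : ℂ)
            + ((D1 φ x : ℝ) : ℂ) * ((φ x * ψ x : ℝ) : ℂ)
          - (((D1 φ x : ℝ) : ℂ) * ((φ x : ℂ) * (ψ x : ℂ))
            + (φ x : ℂ) * (((D1 φ x : ℝ) : ℂ) * (ψ x : ℂ)
              + (φ x : ℂ) * ((D1 ψ x : ℝ) : ℂ)))) x.1 :=
      ((HDφ1 x).ofReal_comp.mul (HΔ1 x).ofReal_comp).sub
        ((Hφ1 x).ofReal_comp.mul ((Hφ1 x).ofReal_comp.mul (Hψ1 x).ofReal_comp))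
    have hDen : HasDerivAt (fun t => ((Δ (t, x.2) : ℝ) : ℂ) ^ 2)
        (((φ x * ψ x : ℝ) : ℂ) * (Δ x : ℂ) + (Δ x : ℂ) * ((φ x * ψ x : ℝ) : ℂ)) x.1 := by
      have h : HasDerivAt (fun t => ((Δ (t, x.2) : ℝ) : ℂ) * ((Δ (t, x.2) : ℝ) : ℂ))
          (((φ x * ψ x : ℝ) : ℂ) * (Δ x : ℂ) + (Δ x : ℂ) * ((φ x * ψ x : ℝ) : ℂ)) x.1 :=
        (HΔ1 x).ofReal_comp.mul (HΔ1 x).ofReal_comp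
      simpa only [← pow_two] using h
    have hQ := hN.div hDen (pow_ne_zero 2 (hDC x))
    have h := ((HDf1 x).sub
        (hQ.mul ((hasDerivAt_const x.1 C).add (Hβ1 x)))).sub
      ((((Hφ1 x).ofReal_comp.div ((HΔ1 x).ofReal_comp) (hDC x)).mul
        ((Hf1 x).mul (Hψ1 x).ofReal_comp)))
    refine h.deriv.trans ?_
    simp only [Pi.div_apply, Pi.add_apply, Pi.mul_apply, Pi.sub_apply, Prod.mk.eta]
    push_cast
    ring
  -- second-variable derivative
  have h2 : D2 (fun y => f y - (φ y : ℂ) / (Δ y : ℂ) * (C + β y)) x =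
      (D1 (D1 f) x - (u x : ℂ) * f x)
        - ((((D1 (D1 φ) x : ℝ) : ℂ) - (u x : ℂ) * (φ x : ℂ)) * (Δ x : ℂ)
            - (φ x : ℂ) * (-((φ x : ℂ) * ((D1 ψ x : ℝ) : ℂ)
                - (ψ x : ℂ) * ((D1 φ x : ℝ) : ℂ)))) / ((Δ x : ℂ)) ^ 2 * (C + β x)
        - (φ x : ℂ) / (Δ x : ℂ)
            * (-(f x * ((D1 ψ x : ℝ) : ℂ) - (ψ x : ℂ) * D1 f x)) := by
    have h := (Hf2 x).sub
      ((((Hφ2 x).ofReal_comp.div ((HΔ2 x).ofReal_comp) (hDC x)).mul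
        ((hasDerivAt_const x.2 C).add (Hβ2 x))))
    refine h.deriv.trans ?_
    simp only [Pi.div_apply, Pi.add_apply, Prod.mk.eta]
    push_cast
    ring
  rw [h11, h2, hu₁ x, hu2]
  have hx : ((Δ x : ℝ) : ℂ) ≠ 0 := hDC x
  push_cast
  field_simp
  rw [mul_zero]
  ring
end

section
/- Let p₁, p₂, q₁, q₂ : ℝ² → ℝ be differentiable functions, let c₁₁, c₁₂, c₂₁, c₂₂ be real constants, and let B_{jl} : ℝ² → ℝ (j,l ∈ {1,2}) be differentiable functions with ∂_{x₁}B_{jl} = p_l·q_j. Set A_{jl} = c_{jl} + B_{jl}, and suppose Δ₁ := A₁₁ is nowhere vanishing. Define φ₁ := p₂ − (p₁/Δ₁)·A₁₂ and ψ₁ := q₂ − (q₁/Δ₁)·A₂₁. Then ∂_{x₁}( (A₁₁A₂₂ − A₁₂A₂₁)/Δ₁ ) = φ₁·ψ₁; in particular, if Δ₂ is any antiderivative in x₁ of φ₁ψ₁, then Δ₁·Δ₂ differs from det(A) = A₁₁A₂₂ − A₁₂A₂₁ by a function of x₂ times Δ₁. -/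
open MeasureTheory Filter Set

/-!
Since `det A / A₁₁ = A₂₂ - A₂₁ A₁₂ / A₁₁` is a Schur complement, the quotient rule together with
`∂₁A_{jl} = p_l q_j` makes its `x₁`-derivative factor as `(p₂ - p₁ A₁₂ / A₁₁)(q₂ - q₁ A₂₁ / A₁₁)`.
Two functions with the same `x₁`-derivative differ by a function of `x₂`, which gives the
second claim after multiplying by `Δ₁ = A₁₁`.
-/

theorem hasDerivAt_det_div {𝕜 : Type*} [NontriviallyNormedField 𝕜]
    {a₁₁ a₁₂ a₂₁ a₂₂ : 𝕜 → 𝕜} {p₁ p₂ q₁ q₂ t : 𝕜}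
    (h₁₁ : HasDerivAt a₁₁ (p₁ * q₁) t) (h₁₂ : HasDerivAt a₁₂ (p₂ * q₁) t)
    (h₂₁ : HasDerivAt a₂₁ (p₁ * q₂) t) (h₂₂ : HasDerivAt a₂₂ (p₂ * q₂) t)
    (h₀ : a₁₁ t ≠ 0) :
    HasDerivAt (fun s => (a₁₁ s * a₂₂ s - a₁₂ s * a₂₁ s) / a₁₁ s)
      ((p₂ - p₁ / a₁₁ t * a₁₂ t) * (q₂ - q₁ / a₁₁ t * a₂₁ t)) t := by
  refine (((h₁₁.mul h₂₂).sub (h₁₂.mul h₂₁)).div h₁₁ h₀).congr_deriv ?_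
  simp only [Pi.sub_apply, Pi.mul_apply]
  field_simp
  ring

section Slice

variable {E : Type*} [NormedAddCommGroup E] [NormedSpace ℝ E]

theorem Differentiable.hasDerivAt_D1 {f : ℝ × ℝ → E} (hf : Differentiable ℝ f) (x : ℝ × ℝ) :
    HasDerivAt (fun t => f (t, x.2)) (D1 f x) x.1 :=
  ((hf _).comp x.1 ((hasDerivAt_id x.1).prodMk (hasDerivAt_const x.1 x.2)).differentiableAt)
    |>.hasDerivAt

theorem hasDerivAt_slice_const_add {A B d : ℝ × ℝ → E} {c : E} (hB : Differentiable ℝ B)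
    (hBd : ∀ x, D1 B x = d x) (hA : ∀ x, A x = c + B x) (x : ℝ × ℝ) :
    HasDerivAt (fun t => A (t, x.2)) (d x) x.1 := by
  simpa only [hA, hBd] using (hB.hasDerivAt_D1 x).const_add c

theorem exists_eq_add_of_hasDerivAt_slice {F G f : ℝ × ℝ → E}
    (hF : ∀ x, HasDerivAt (fun t => F (t, x.2)) (f x) x.1)
    (hG : ∀ x, HasDerivAt (fun t => G (t, x.2)) (f x) x.1) :
    ∃ g : ℝ → E, ∀ x, G x = F x + g x.2 := by
  refine ⟨fun s => G (0, s) - F (0, s), fun x => ?_⟩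
  have hzero : ∀ t, HasDerivAt (fun t => G (t, x.2) - F (t, x.2)) 0 t := fun t =>
    sub_self (f (t, x.2)) ▸ (hG (t, x.2)).sub (hF (t, x.2))
  have hconst := is_const_of_deriv_eq_zero (fun t => (hzero t).differentiableAt)
    (fun t => (hzero t).deriv) x.1 0
  simp only [Prod.mk.eta] at hconst
  show G x = F x + (G (0, x.2) - F (0, x.2))
  rw [← hconst]
  abel

end Slice

theorem determinant_identity_two_backlund_general
    (p₁ p₂ q₁ q₂ : ℝ × ℝ → ℝ)
    (c₁₁ c₁₂ c₂₁ c₂₂ : ℝ)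
    (B₁₁ B₁₂ B₂₁ B₂₂ : ℝ × ℝ → ℝ)
    (hB₁₁ : Differentiable ℝ B₁₁) (hB₁₂ : Differentiable ℝ B₁₂)
    (hB₂₁ : Differentiable ℝ B₂₁) (hB₂₂ : Differentiable ℝ B₂₂)
    (hB₁₁d : ∀ x : ℝ × ℝ, D1 B₁₁ x = p₁ x * q₁ x)
    (hB₁₂d : ∀ x : ℝ × ℝ, D1 B₁₂ x = p₂ x * q₁ x)
    (hB₂₁d : ∀ x : ℝ × ℝ, D1 B₂₁ x = p₁ x * q₂ x)
    (hB₂₂d : ∀ x : ℝ × ℝ, D1 B₂₂ x = p₂ x * q₂ x)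
    (A₁₁ A₁₂ A₂₁ A₂₂ : ℝ × ℝ → ℝ)
    (hA₁₁ : ∀ x, A₁₁ x = c₁₁ + B₁₁ x) (hA₁₂ : ∀ x, A₁₂ x = c₁₂ + B₁₂ x)
    (hA₂₁ : ∀ x, A₂₁ x = c₂₁ + B₂₁ x) (hA₂₂ : ∀ x, A₂₂ x = c₂₂ + B₂₂ x)
    (hΔ₁0 : ∀ x, A₁₁ x ≠ 0)
    (φ₁ ψ₁ : ℝ × ℝ → ℝ)
    (hφ₁ : ∀ x, φ₁ x = p₂ x - p₁ x / A₁₁ x * A₁₂ x)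
    (hψ₁ : ∀ x, ψ₁ x = q₂ x - q₁ x / A₁₁ x * A₂₁ x) :
    (∀ x : ℝ × ℝ,
      D1 (fun y => (A₁₁ y * A₂₂ y - A₁₂ y * A₂₁ y) / A₁₁ y) x = φ₁ x * ψ₁ x) ∧
    (∀ Δ₂ : ℝ × ℝ → ℝ,
      (∀ x : ℝ × ℝ, HasDerivAt (fun t => Δ₂ (t, x.2)) (φ₁ x * ψ₁ x) x.1) →
      ∃ g : ℝ → ℝ, ∀ x : ℝ × ℝ,
        A₁₁ x * Δ₂ x = (A₁₁ x * A₂₂ x - A₁₂ x * A₂₁ x) + g x.2 * A₁₁ x) := by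
  have key : ∀ x : ℝ × ℝ, HasDerivAt
      (fun t => (A₁₁ (t, x.2) * A₂₂ (t, x.2) - A₁₂ (t, x.2) * A₂₁ (t, x.2)) / A₁₁ (t, x.2))
      (φ₁ x * ψ₁ x) x.1 := fun x => by
    rw [hφ₁, hψ₁]
    exact hasDerivAt_det_div (hasDerivAt_slice_const_add hB₁₁ hB₁₁d hA₁₁ x)
      (hasDerivAt_slice_const_add hB₁₂ hB₁₂d hA₁₂ x) (hasDerivAt_slice_const_add hB₂₁ hB₂₁d hA₂₁ x)
      (hasDerivAt_slice_const_add hB₂₂ hB₂₂d hA₂₂ x) (hΔ₁0 x)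
  refine ⟨fun x => (key x).deriv, fun Δ₂ hΔ₂ => ?_⟩
  obtain ⟨g, hg⟩ := exists_eq_add_of_hasDerivAt_slice
    (F := fun y => (A₁₁ y * A₂₂ y - A₁₂ y * A₂₁ y) / A₁₁ y) key hΔ₂
  refine ⟨g, fun x => ?_⟩
  rw [hg x]
  field_simp [hΔ₁0 x]

/-- The determinant identity behind the composition of two binary
Bäcklund transformations: with `∂₁B_{jl} = p_l q_j`, `A_{jl} = c_{jl} + B_{jl}`,
`Δ₁ = A₁₁` nowhere vanishing, `φ₁ = p₂ - (p₁/Δ₁)A₁₂` and `ψ₁ = q₂ - (q₁/Δ₁)A₂₁`, one has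
`∂₁(det A / Δ₁) = φ₁ψ₁`; in particular any `x₁`-antiderivative `Δ₂` of `φ₁ψ₁` satisfies
`Δ₁Δ₂ = det A + g(x₂)·Δ₁` for some function `g` of `x₂` alone. -/
theorem determinant_identity_two_backlund
    (p₁ p₂ q₁ q₂ : ℝ × ℝ → ℝ)
    (hp₁ : Differentiable ℝ p₁) (hp₂ : Differentiable ℝ p₂)
    (hq₁ : Differentiable ℝ q₁) (hq₂ : Differentiable ℝ q₂)
    (c₁₁ c₁₂ c₂₁ c₂₂ : ℝ)
    (B₁₁ B₁₂ B₂₁ B₂₂ : ℝ × ℝ → ℝ)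
    (hB₁₁ : Differentiable ℝ B₁₁) (hB₁₂ : Differentiable ℝ B₁₂)
    (hB₂₁ : Differentiable ℝ B₂₁) (hB₂₂ : Differentiable ℝ B₂₂)
    (hB₁₁d : ∀ x : ℝ × ℝ, D1 B₁₁ x = p₁ x * q₁ x)
    (hB₁₂d : ∀ x : ℝ × ℝ, D1 B₁₂ x = p₂ x * q₁ x)
    (hB₂₁d : ∀ x : ℝ × ℝ, D1 B₂₁ x = p₁ x * q₂ x)
    (hB₂₂d : ∀ x : ℝ × ℝ, D1 B₂₂ x = p₂ x * q₂ x)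
    (A₁₁ A₁₂ A₂₁ A₂₂ : ℝ × ℝ → ℝ)
    (hA₁₁ : ∀ x, A₁₁ x = c₁₁ + B₁₁ x) (hA₁₂ : ∀ x, A₁₂ x = c₁₂ + B₁₂ x)
    (hA₂₁ : ∀ x, A₂₁ x = c₂₁ + B₂₁ x) (hA₂₂ : ∀ x, A₂₂ x = c₂₂ + B₂₂ x)
    (hΔ₁0 : ∀ x, A₁₁ x ≠ 0)
    (φ₁ ψ₁ : ℝ × ℝ → ℝ)
    (hφ₁ : ∀ x, φ₁ x = p₂ x - p₁ x / A₁₁ x * A₁₂ x)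
    (hψ₁ : ∀ x, ψ₁ x = q₂ x - q₁ x / A₁₁ x * A₂₁ x) :
    (∀ x : ℝ × ℝ,
      D1 (fun y => (A₁₁ y * A₂₂ y - A₁₂ y * A₂₁ y) / A₁₁ y) x = φ₁ x * ψ₁ x) ∧
    (∀ Δ₂ : ℝ × ℝ → ℝ,
      (∀ x : ℝ × ℝ, HasDerivAt (fun t => Δ₂ (t, x.2)) (φ₁ x * ψ₁ x) x.1) →
      ∃ g : ℝ → ℝ, ∀ x : ℝ × ℝ,
        A₁₁ x * Δ₂ x = (A₁₁ x * A₂₂ x - A₁₂ x * A₂₁ x) + g x.2 * A₁₁ x) :=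
  determinant_identity_two_backlund_general p₁ p₂ q₁ q₂ c₁₁ c₁₂ c₂₁ c₂₂ B₁₁ B₁₂ B₂₁ B₂₂ hB₁₁ hB₁₂
    hB₂₁ hB₂₂ hB₁₁d hB₁₂d hB₂₁d hB₂₂d A₁₁ A₁₂ A₂₁ A₂₂ hA₁₁ hA₁₂ hA₂₁ hA₂₂ hΔ₁0 φ₁ ψ₁ hφ₁ hψ₁
end
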